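/- arXiv:1508.05784 — 2 statements merged into one kernel-verified Lean document; each statement's English description precedes it below -/
import Mathlib

section
/- Let Γ be a circle in ℝ² and let A be an arc of Γ of angular measure strictly less than π (less than a half-circle). Let p_1, …, p_m (m ≥ 3) be distinct points on A, ordered along the arc. Then p_1, …, p_m are in strictly convex position and appear in this order along the boundary of their convex hull, the internal angle of the polygon p_1 p_2 … p_m at p_1 (namely the angle ∠ p_2 p_1 p_m) and at p_m (namely ∠ p_{m−1} p_m p_1) are strictly less than π/2 (acute), and the internal angle at each p_i with 2 ≤ i ≤ m−1 (namely ∠ p_{i−1} p_i p_{i+1}) is strictly greater than π/2 (obtuse). -/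
open Set Metric Bornology
open scoped RealInnerProductSpace

noncomputable section

/-- The Euclidean plane. -/
abbrev E2 : Type := EuclideanSpace ℝ (Fin 2)

/-- The point of the circle with center `O` and radius `r` at angle `θ`. -/
def circPt (O : E2) (r θ : ℝ) : E2 :=
  O + r • (WithLp.equiv 2 (Fin 2 → ℝ)).symm ![Real.cos θ, Real.sin θ]

/-- The 2D cross product (signed area form) of two vectors of the plane. -/
def cross2 (u v : E2) : ℝ := u 0 * v 1 - u 1 * v 0


/-!
The chord `circPt O r a - circPt O r b` is `2 r sin ((a - b) / 2)` times the unit vector at angle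
`(a + b) / 2 + π / 2`, so inner and cross products of two chords from a common point factor into
sines of half angle differences and the cosine, resp. sine, of half the remaining difference.
On an arc shorter than a half-circle every such cosine is positive and each sine has the sign of
its angle difference: the angle at a point is acute when both neighbours lie on the same side of it
along the arc, obtuse when they lie on opposite sides, and all ordered triples have the same
orientation. Convex position needs no arc condition: a point of a circle is an extreme point of the
disc, hence of every convex set lying between the point and the disc.
-/

open Real EuclideanGeometry InnerProductGeometry

theorem sign_sin_half {x : ℝ} (hx : |x| < 2 * π) :
    SignType.sign (sin (x / 2)) = SignType.sign x := by
  rw [abs_lt] at hx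
  rcases lt_trichotomy x 0 with hneg | rfl | hpos
  · rw [sign_neg hneg, sign_neg (sin_neg_of_neg_of_neg_pi_lt (by linarith) (by linarith))]
  · simp
  · rw [sign_pos hpos, sign_pos (sin_pos_of_pos_of_lt_pi (by linarith) (by linarith))]

namespace InnerProductGeometry

variable {V : Type*} [NormedAddCommGroup V] [InnerProductSpace ℝ V]

theorem angle_lt_pi_div_two_of_inner_pos {x y : V} (h : 0 < ⟪x, y⟫) : angle x y < π / 2 := by
  rw [angle, arccos_lt_pi_div_two]
  exact div_pos h (h.trans_le (real_inner_le_norm x y))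

theorem pi_div_two_lt_angle_of_inner_neg {x y : V} (h : ⟪x, y⟫ < 0) : π / 2 < angle x y := by
  have := angle_lt_pi_div_two_of_inner_pos (x := x) (y := -y) (by rwa [inner_neg_right, neg_pos])
  rw [angle_neg_right] at this
  linarith

end InnerProductGeometry

theorem mem_extremePoints_convexHull_of_subset_sphere {V : Type*} [NormedAddCommGroup V]
    [NormedSpace ℝ V] [StrictConvexSpace ℝ V] {S : Set V} {c : V} {ρ : ℝ}
    (hS : S ⊆ sphere c ρ) {x : V} (hx : x ∈ S) : x ∈ (convexHull ℝ S).extremePoints ℝ := by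
  rcases eq_or_ne ρ 0 with rfl | hρ
  · rw [sphere_zero] at hS
    simp [(Set.subsingleton_singleton.anti hS).eq_singleton_of_mem hx]
  · exact inter_extremePoints_subset_extremePoints_of_subset
      (convexHull_min (hS.trans sphere_subset_closedBall) (convex_closedBall c ρ))
      ⟨subset_convexHull ℝ S hx,
        StrictConvexSpace.sphere_subset_extremePoints_closedBall c hρ (hS hx)⟩

theorem exists_sign_mul_sub_pos {ι : Type*} [Preorder ι] {s : Set ι} {f : ι → ℝ}
    (h : StrictMonoOn f s ∨ StrictAntiOn f s) :
    ∃ σ : ℝ, (σ = 1 ∨ σ = -1) ∧ ∀ i ∈ s, ∀ j ∈ s, i < j → 0 < σ * (f j - f i) := by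
  rcases h with h | h
  · exact ⟨1, Or.inl rfl, fun i hi j hj hij => by linarith [h hi hj hij]⟩
  · exact ⟨-1, Or.inr rfl, fun i hi j hj hij => by linarith [h hi hj hij]⟩

theorem circPt_mem_sphere (O : E2) (r θ : ℝ) : circPt O r θ ∈ sphere O |r| := by
  simp [circPt, EuclideanSpace.norm_eq, norm_smul]

theorem circPt_apply_zero (O : E2) (r θ : ℝ) : circPt O r θ 0 = O 0 + r * cos θ := by
  simp [circPt]

theorem circPt_apply_one (O : E2) (r θ : ℝ) : circPt O r θ 1 = O 1 + r * sin θ := by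
  simp [circPt]

theorem circPt_sub_circPt (O : E2) (r a b : ℝ) :
    circPt O r a - circPt O r b = circPt 0 (2 * r * sin ((a - b) / 2)) ((a + b) / 2 + π / 2) := by
  ext i
  fin_cases i
  · simp only [Fin.zero_eta, PiLp.sub_apply, circPt_apply_zero, PiLp.zero_apply,
      cos_add_pi_div_two]
    linear_combination r * cos_sub_cos a b
  · simp only [Fin.mk_one, PiLp.sub_apply, circPt_apply_one, PiLp.zero_apply, sin_add_pi_div_two]
    linear_combination r * sin_sub_sin a b

theorem inner_circPt_zero (s t φ ψ : ℝ) :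
    ⟪circPt 0 s φ, circPt 0 t ψ⟫ = s * t * cos (φ - ψ) := by
  simp only [PiLp.inner_apply, RCLike.inner_apply, conj_trivial, Fin.sum_univ_two,
    circPt_apply_zero, circPt_apply_one, PiLp.zero_apply, cos_sub]
  ring

theorem cross2_circPt_zero (s t φ ψ : ℝ) :
    cross2 (circPt 0 s φ) (circPt 0 t ψ) = s * t * sin (ψ - φ) := by
  rw [cross2, circPt_apply_zero, circPt_apply_one, circPt_apply_zero, circPt_apply_one,
    PiLp.zero_apply, PiLp.zero_apply, sin_sub]
  ring

theorem inner_circPt_sub_circPt (O : E2) (r a b c : ℝ) :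
    ⟪circPt O r a - circPt O r b, circPt O r c - circPt O r b⟫
      = 4 * r ^ 2 * sin ((a - b) / 2) * sin ((c - b) / 2) * cos ((a - c) / 2) := by
  rw [circPt_sub_circPt, circPt_sub_circPt, inner_circPt_zero]
  ring_nf

theorem cross2_circPt_sub_circPt (O : E2) (r a b c : ℝ) :
    cross2 (circPt O r b - circPt O r a) (circPt O r c - circPt O r a)
      = 4 * r ^ 2 * sin ((b - a) / 2) * sin ((c - a) / 2) * sin ((c - b) / 2) := by
  rw [circPt_sub_circPt, circPt_sub_circPt, cross2_circPt_zero]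
  ring_nf

section Signs

variable {O : E2} {r a b c : ℝ}

theorem sign_inner_circPt_sub_circPt (hr : r ≠ 0)
    (hab : |a - b| < 2 * π) (hcb : |c - b| < 2 * π) (hac : |a - c| < π) :
    SignType.sign ⟪circPt O r a - circPt O r b, circPt O r c - circPt O r b⟫
      = SignType.sign ((a - b) * (c - b)) := by
  have hcos : 0 < cos ((a - c) / 2) := by
    rw [abs_lt] at hac
    exact cos_pos_of_mem_Ioo ⟨by linarith, by linarith⟩
  rw [inner_circPt_sub_circPt, sign_mul, sign_mul, sign_mul,
    sign_pos (by positivity : (0 : ℝ) < 4 * r ^ 2), sign_sin_half hab, sign_sin_half hcb,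
    sign_pos hcos, sign_mul, one_mul, mul_one]

theorem sign_cross2_circPt_sub_circPt (hr : r ≠ 0)
    (hba : |b - a| < 2 * π) (hca : |c - a| < 2 * π) (hcb : |c - b| < 2 * π) :
    SignType.sign (cross2 (circPt O r b - circPt O r a) (circPt O r c - circPt O r a))
      = SignType.sign ((b - a) * (c - a) * (c - b)) := by
  rw [cross2_circPt_sub_circPt, sign_mul, sign_mul, sign_mul, sign_sin_half hba,
    sign_sin_half hca, sign_sin_half hcb, sign_pos (by positivity : (0 : ℝ) < 4 * r ^ 2),
    sign_mul, sign_mul, one_mul]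

theorem angle_circPt_lt_pi_div_two (hr : r ≠ 0)
    (hab : |a - b| < 2 * π) (hcb : |c - b| < 2 * π) (hac : |a - c| < π)
    (h : 0 < (a - b) * (c - b)) : ∠ (circPt O r a) (circPt O r b) (circPt O r c) < π / 2 := by
  refine angle_lt_pi_div_two_of_inner_pos ?_
  rwa [← sign_eq_one_iff, vsub_eq_sub, vsub_eq_sub, sign_inner_circPt_sub_circPt hr hab hcb hac,
    sign_eq_one_iff]

theorem pi_div_two_lt_angle_circPt (hr : r ≠ 0)
    (hab : |a - b| < 2 * π) (hcb : |c - b| < 2 * π) (hac : |a - c| < π)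
    (h : (a - b) * (c - b) < 0) : π / 2 < ∠ (circPt O r a) (circPt O r b) (circPt O r c) := by
  refine pi_div_two_lt_angle_of_inner_neg ?_
  rwa [← sign_eq_neg_one_iff, vsub_eq_sub, vsub_eq_sub,
    sign_inner_circPt_sub_circPt hr hab hcb hac, sign_eq_neg_one_iff]

theorem mul_cross2_circPt_sub_circPt_pos {σ : ℝ} (hr : r ≠ 0)
    (hba : |b - a| < 2 * π) (hca : |c - a| < 2 * π) (hcb : |c - b| < 2 * π)
    (hab : 0 < σ * (b - a)) (hac : 0 < σ * (c - a)) (hbc : 0 < σ * (c - b)) :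
    0 < σ * cross2 (circPt O r b - circPt O r a) (circPt O r c - circPt O r a) := by
  have hprod : 0 < σ * ((b - a) * (c - a) * (c - b)) := by
    nlinarith [mul_pos (mul_pos hab hac) hbc, sq_nonneg σ]
  rwa [← sign_eq_one_iff, sign_mul, sign_cross2_circPt_sub_circPt hr hba hca hcb, ← sign_mul,
    sign_eq_one_iff]

end Signs

theorem arc_points_convex_position_angles_general (O : E2) (r : ℝ) (hr : 0 < r)
    (θ₀ α : ℝ) (hαπ : α < Real.pi)
    (m : ℕ) (hm : 3 ≤ m) (θ : ℕ → ℝ) (p : ℕ → E2)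
    (hmono : StrictMonoOn θ (Set.Icc 1 m) ∨ StrictAntiOn θ (Set.Icc 1 m))
    (hθ : ∀ i ∈ Set.Icc 1 m, θ i ∈ Set.Icc θ₀ (θ₀ + α))
    (hp : ∀ i ∈ Set.Icc 1 m, p i = circPt O r (θ i)) :
    (∀ i ∈ Set.Icc 1 m,
      p i ∈ Set.extremePoints ℝ (convexHull ℝ (p '' Set.Icc 1 m))) ∧
    (∃ s : ℝ, (s = 1 ∨ s = -1) ∧
      ∀ i j k : ℕ, 1 ≤ i → i < j → j < k → k ≤ m →
        0 < s * cross2 (p j - p i) (p k - p i)) ∧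
    EuclideanGeometry.angle (p 2) (p 1) (p m) < Real.pi / 2 ∧
    EuclideanGeometry.angle (p (m - 1)) (p m) (p 1) < Real.pi / 2 ∧
    (∀ i : ℕ, 2 ≤ i → i ≤ m - 1 →
      Real.pi / 2 < EuclideanGeometry.angle (p (i - 1)) (p i) (p (i + 1))) := by
  obtain ⟨σ, hσ, hord⟩ := exists_sign_mul_sub_pos hmono
  have hσσ : σ * σ = 1 := by rcases hσ with rfl | rfl <;> norm_num
  have mem (i : ℕ) (h1 : 1 ≤ i) (h2 : i ≤ m) : i ∈ Icc 1 m := ⟨h1, h2⟩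
  have hclose {i j : ℕ} (hi : i ∈ Icc 1 m) (hj : j ∈ Icc 1 m) : |θ i - θ j| < π := by
    rw [← Real.dist_eq]
    exact (Real.dist_le_of_mem_Icc (hθ i hi) (hθ j hj)).trans_lt (by linarith)
  have hclose2 {i j : ℕ} (hi : i ∈ Icc 1 m) (hj : j ∈ Icc 1 m) : |θ i - θ j| < 2 * π := by
    linarith [hclose hi hj, pi_pos]
  have h1 := mem 1 le_rfl (by omega)
  have hmm := mem m (by omega) le_rfl
  refine ⟨fun i hi => ?_, ⟨σ, hσ, fun i j k hi hij hjk hk => ?_⟩, ?_, ?_, fun i hi hi' => ?_⟩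
  · refine mem_extremePoints_convexHull_of_subset_sphere (c := O) (ρ := |r|) ?_
      (mem_image_of_mem p hi)
    rintro _ ⟨j, hj, rfl⟩
    exact hp j hj ▸ circPt_mem_sphere O r (θ j)
  · have hi := mem i hi (by omega); have hj := mem j (by omega) (by omega)
    have hk := mem k (by omega) hk
    rw [hp i hi, hp j hj, hp k hk]
    exact mul_cross2_circPt_sub_circPt_pos hr.ne' (hclose2 hj hi) (hclose2 hk hi) (hclose2 hk hj)
      (hord i hi j hj hij) (hord i hi k hk (by omega)) (hord j hj k hk hjk)
  · have h2 := mem 2 (by omega) (by omega)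
    rw [hp 1 h1, hp 2 h2, hp m hmm]
    refine angle_circPt_lt_pi_div_two hr.ne' (hclose2 h2 h1) (hclose2 hmm h1) (hclose h2 hmm) ?_
    nlinarith [mul_pos (hord 1 h1 2 h2 (by omega)) (hord 1 h1 m hmm (by omega))]
  · have hm1 := mem (m - 1) (by omega) (by omega)
    rw [hp 1 h1, hp (m - 1) hm1, hp m hmm]
    refine angle_circPt_lt_pi_div_two hr.ne' (hclose2 hm1 hmm) (hclose2 h1 hmm) (hclose hm1 h1) ?_
    nlinarith [mul_pos (hord (m - 1) hm1 m hmm (by omega)) (hord 1 h1 m hmm (by omega))]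
  · have hprev := mem (i - 1) (by omega) (by omega); have hi := mem i (by omega) (by omega)
    have hnext := mem (i + 1) (by omega) (by omega)
    rw [hp (i - 1) hprev, hp i hi, hp (i + 1) hnext]
    refine pi_div_two_lt_angle_circPt hr.ne' (hclose2 hprev hi) (hclose2 hnext hi)
      (hclose hprev hnext) ?_
    nlinarith [mul_pos (hord (i - 1) hprev i hi (by omega)) (hord i hi (i + 1) hnext (by omega))]

/-- Points `p 1, …, p m` (`m ≥ 3`) ordered along an arc of angular measure strictly
less than `π` are in strictly convex position, appear in this order along the boundary
of their convex hull (all ordered triples have the same orientation), the internal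
angles of the polygon at the first and last points are acute, and the internal angles
at all middle points are obtuse. -/
theorem arc_points_convex_position_angles (O : E2) (r : ℝ) (hr : 0 < r)
    (θ₀ α : ℝ) (hα0 : 0 ≤ α) (hαπ : α < Real.pi)
    (m : ℕ) (hm : 3 ≤ m) (θ : ℕ → ℝ) (p : ℕ → E2)
    (hmono : StrictMonoOn θ (Set.Icc 1 m) ∨ StrictAntiOn θ (Set.Icc 1 m))
    (hθ : ∀ i ∈ Set.Icc 1 m, θ i ∈ Set.Icc θ₀ (θ₀ + α))
    (hp : ∀ i ∈ Set.Icc 1 m, p i = circPt O r (θ i)) :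
    (∀ i ∈ Set.Icc 1 m,
      p i ∈ Set.extremePoints ℝ (convexHull ℝ (p '' Set.Icc 1 m))) ∧
    (∃ s : ℝ, (s = 1 ∨ s = -1) ∧
      ∀ i j k : ℕ, 1 ≤ i → i < j → j < k → k ≤ m →
        0 < s * cross2 (p j - p i) (p k - p i)) ∧
    EuclideanGeometry.angle (p 2) (p 1) (p m) < Real.pi / 2 ∧
    EuclideanGeometry.angle (p (m - 1)) (p m) (p 1) < Real.pi / 2 ∧
    (∀ i : ℕ, 2 ≤ i → i ≤ m - 1 →
      Real.pi / 2 < EuclideanGeometry.angle (p (i - 1)) (p i) (p (i + 1))) :=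
  arc_points_convex_position_angles_general O r hr θ₀ α hαπ m hm θ p hmono hθ hp

end
end

section
/- Let π be a half-circle with center O and radius r > 0, and let p_1, …, p_N (N ≥ 3) be distinct points on π ordered along the arc. For each j ∈ {2, …, N−1}, let S_j ⊆ ℝ² be a set contained in the interior of triangle p_{j−1} p_j p_{j+1} and in the interior of triangle p_1 p_j p_N. Let j_1 < j_2 < … < j_m (m ≥ 3) be indices in {1, …, N} with 2 ≤ j_i ≤ N−1 for 2 ≤ i ≤ m−1, and let Q be the convex hull of {p_{j_1}, …, p_{j_m}}. Then for every i with 2 ≤ i ≤ m−1, the set S_{j_i} is contained in the topological interior of Q. -/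
open Set Metric Bornology
open scoped RealInnerProductSpace

noncomputable section

/-!
Points `p 1, …, p N` taken in order along a half-circle form a strictly convex chain: every
triangle `p u p v p w` with `u < v < w` has the same orientation `σ`. Fix a middle index `j`
and `a < j < b`. The triangle `p a p j p b` is the intersection of three closed half-planes.
The half-planes bounded by the lines `p a p j` and `p j p b` contain `p 1`, `p j` and `p N`,
hence the whole triangle `p 1 p j p N`; the half-plane bounded by `p a p b` contains
`p (j - 1)`, `p j` and `p (j + 1)`, hence the whole triangle `p (j - 1) p j p (j + 1)`.
So the intersection of these two triangles lies in the triangle `p a p j p b`, which for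
consecutive vertices of `Q` lies in `Q`; taking interiors gives the theorem.
-/

def orient (a b c : E2) : ℝ := cross2 (b - a) (c - a)

lemma orient_rotate (a b c : E2) : orient b c a = orient a b c := by
  simp only [orient, cross2, PiLp.sub_apply]; ring

lemma orient_swap (a b c : E2) : orient c b a = -orient a b c := by
  simp only [orient, cross2, PiLp.sub_apply]; ring

@[simp] lemma orient_self_left (a c : E2) : orient a a c = 0 := by
  simp [orient, cross2]

@[simp] lemma orient_self_right (a b : E2) : orient a b b = 0 := by
  simp only [orient, cross2]; ring

lemma convex_setOf_orient_nonneg (σ : ℝ) (a b : E2) :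
    Convex ℝ {x | 0 ≤ σ * orient a b x} := by
  intro x hx y hy s t hs ht hst
  have hlin : orient a b (s • x + t • y) = s * orient a b x + t * orient a b y := by
    simp only [orient, cross2, PiLp.add_apply, PiLp.sub_apply, PiLp.smul_apply, smul_eq_mul]
    linear_combination ((b 0 - a 0) * a 1 - (b 1 - a 1) * a 0) * hst
  simp only [mem_ofPred_eq, hlin] at hx hy ⊢
  nlinarith [mul_nonneg hs hx, mul_nonneg ht hy]

lemma orient_nonneg_of_mem_convexHull {σ : ℝ} {a b u v w x : E2}
    (hu : 0 ≤ σ * orient a b u) (hv : 0 ≤ σ * orient a b v) (hw : 0 ≤ σ * orient a b w)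
    (hx : x ∈ convexHull ℝ {u, v, w}) : 0 ≤ σ * orient a b x := by
  refine convexHull_min ?_ (convex_setOf_orient_nonneg σ a b) hx
  rintro y (rfl | rfl | rfl) <;> assumption

/-- The weights are the barycentric coordinates of `x`, scaled by `σ * orient a b c`. -/
lemma mem_convexHull_of_orient_nonneg {σ : ℝ} {a b c x : E2} (habc : 0 < σ * orient a b c)
    (hab : 0 ≤ σ * orient a b x) (hbc : 0 ≤ σ * orient b c x) (hca : 0 ≤ σ * orient c a x) :
    x ∈ convexHull ℝ {a, b, c} := by
  have hsum : σ * orient b c x + σ * orient c a x + σ * orient a b x = σ * orient a b c := by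
    simp only [orient, cross2, PiLp.sub_apply]
    ring
  have hvec : (σ * orient b c x) • a + (σ * orient c a x) • b + (σ * orient a b x) • c =
      (σ * orient a b c) • x := by
    ext k
    fin_cases k <;>
      simp only [orient, cross2, PiLp.add_apply, PiLp.smul_apply, PiLp.sub_apply, smul_eq_mul,
        Fin.zero_eta, Fin.mk_one] <;>
      ring
  have hmem := Finset.centerMass_mem_convexHull (s := ({a, b, c} : Set E2)) Finset.univ
    (w := ![σ * orient b c x, σ * orient c a x, σ * orient a b x]) (z := ![a, b, c])
    (by intro i _; fin_cases i <;> assumption) (by simpa [Fin.sum_univ_three, hsum])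
    (by intro i _; fin_cases i <;> simp)
  simp only [Finset.centerMass, Fin.sum_univ_three, Matrix.cons_val_zero, Matrix.cons_val_one,
    Matrix.cons_val_two, Matrix.head_cons, Matrix.tail_cons] at hmem
  rwa [hsum, hvec, smul_smul, inv_mul_cancel₀ habc.ne', one_smul] at hmem

def IsConvexChain (σ : ℝ) (p : ℕ → E2) (N : ℕ) : Prop :=
  ∀ ⦃u v w : ℕ⦄, 1 ≤ u → u < v → v < w → w ≤ N → 0 < σ * orient (p u) (p v) (p w)

namespace IsConvexChain

variable {σ : ℝ} {p : ℕ → E2} {N : ℕ}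

lemma orient_nonneg (h : IsConvexChain σ p N) {u v w : ℕ} (hu : 1 ≤ u) (huv : u ≤ v)
    (hvw : v ≤ w) (hw : w ≤ N) : 0 ≤ σ * orient (p u) (p v) (p w) := by
  rcases huv.eq_or_lt with rfl | huv
  · simp
  rcases hvw.eq_or_lt with rfl | hvw
  · simp
  exact (h hu huv hvw hw).le

lemma inter_convexHull_subset (h : IsConvexChain σ p N) {a j b : ℕ} (ha : 1 ≤ a)
    (haj : a < j) (hjb : j < b) (hb : b ≤ N) :
    convexHull ℝ {p (j - 1), p j, p (j + 1)} ∩ convexHull ℝ {p 1, p j, p N} ⊆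
      convexHull ℝ {p a, p j, p b} := by
  rintro x ⟨hx₁, hx₂⟩
  refine mem_convexHull_of_orient_nonneg (h ha haj hjb hb) ?_ ?_ ?_
  · refine orient_nonneg_of_mem_convexHull ?_ ?_ ?_ hx₂
    · rw [orient_rotate]; exact h.orient_nonneg le_rfl ha haj.le (by omega)
    · exact h.orient_nonneg ha haj.le le_rfl (by omega)
    · exact h.orient_nonneg ha haj.le (by omega) le_rfl
  · refine orient_nonneg_of_mem_convexHull ?_ ?_ ?_ hx₂
    · rw [orient_rotate]; exact h.orient_nonneg le_rfl (by omega) hjb.le hb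
    · rw [orient_rotate]; exact h.orient_nonneg (by omega) le_rfl hjb.le hb
    · exact h.orient_nonneg (by omega) hjb.le hb le_rfl
  · refine orient_nonneg_of_mem_convexHull ?_ ?_ ?_ hx₁ <;>
      rw [← orient_rotate] <;> exact h.orient_nonneg ha (by omega) (by omega) hb

end IsConvexChain

lemma sin_add_lt_sin_add_sin {x y : ℝ} (hx : 0 < x) (hy : 0 < y) (hxy : x + y ≤ Real.pi) :
    Real.sin (x + y) < Real.sin x + Real.sin y := by
  have hsx : 0 < Real.sin x := Real.sin_pos_of_pos_of_lt_pi hx (by linarith)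
  have hsy : 0 < Real.sin y := Real.sin_pos_of_pos_of_lt_pi hy (by linarith)
  have hcx : Real.cos x < 1 := by
    simpa using Real.strictAntiOn_cos (left_mem_Icc.2 Real.pi_pos.le)
      ⟨hx.le, by linarith⟩ hx
  have hcy : Real.cos y ≤ 1 := Real.cos_le_one y
  rw [Real.sin_add]
  nlinarith

lemma orient_circPt (O : E2) (r a b c : ℝ) :
    orient (circPt O r a) (circPt O r b) (circPt O r c) =
      r ^ 2 * (Real.sin (b - a) + Real.sin (c - b) - Real.sin (c - a)) := by
  simp only [orient, cross2, circPt, WithLp.equiv_symm_apply, add_sub_add_left_eq_sub,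
    PiLp.sub_apply, PiLp.smul_apply, smul_eq_mul, Matrix.cons_val_zero, Matrix.cons_val_one,
    Matrix.cons_val_fin_one, Real.sin_sub]
  ring

lemma orient_circPt_pos (O : E2) {r a b c : ℝ} (hr : 0 < r) (hab : a < b) (hbc : b < c)
    (hca : c - a ≤ Real.pi) : 0 < orient (circPt O r a) (circPt O r b) (circPt O r c) := by
  have h := sin_add_lt_sin_add_sin (sub_pos.2 hab) (sub_pos.2 hbc) (by linarith)
  rw [sub_add_sub_cancel'] at h
  rw [orient_circPt]
  exact mul_pos (pow_pos hr 2) (by linarith)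

lemma exists_isConvexChain {O : E2} {r θ₀ : ℝ} {N : ℕ} {θ : ℕ → ℝ} {p : ℕ → E2} (hr : 0 < r)
    (hmono : StrictMonoOn θ (Icc 1 N) ∨ StrictAntiOn θ (Icc 1 N))
    (hθ : ∀ i ∈ Icc 1 N, θ i ∈ Icc θ₀ (θ₀ + Real.pi))
    (hp : ∀ i ∈ Icc 1 N, p i = circPt O r (θ i)) :
    ∃ σ, IsConvexChain σ p N := by
  have hpos : ∀ u ∈ Icc 1 N, ∀ v ∈ Icc 1 N, ∀ w ∈ Icc 1 N, θ u < θ v → θ v < θ w →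
      0 < orient (p u) (p v) (p w) := by
    intro u hu v hv w hw huv hvw
    rw [hp u hu, hp v hv, hp w hw]
    exact orient_circPt_pos O hr huv hvw (by linarith [(hθ u hu).1, (hθ w hw).2])
  rcases hmono with hmono | hanti
  · refine ⟨1, fun u v w hu huv hvw hw => ?_⟩
    have hu' : u ∈ Icc 1 N := ⟨hu, by omega⟩
    have hv' : v ∈ Icc 1 N := ⟨by omega, by omega⟩
    have hw' : w ∈ Icc 1 N := ⟨by omega, hw⟩
    rw [one_mul]
    exact hpos u hu' v hv' w hw' (hmono hu' hv' huv) (hmono hv' hw' hvw)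
  · refine ⟨-1, fun u v w hu huv hvw hw => ?_⟩
    have hu' : u ∈ Icc 1 N := ⟨hu, by omega⟩
    have hv' : v ∈ Icc 1 N := ⟨by omega, by omega⟩
    have hw' : w ∈ Icc 1 N := ⟨by omega, hw⟩
    rw [neg_one_mul, ← orient_swap]
    exact hpos w hw' v hv' u hu' (hanti hv' hw' hvw) (hanti hu' hv' huv)

theorem polygon_contains_middle_point_sets_general (O : E2) (r : ℝ) (hr : 0 < r) (θ₀ : ℝ)
    (N : ℕ) (θ : ℕ → ℝ) (p : ℕ → E2) (S : ℕ → Set E2)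
    (hmono : StrictMonoOn θ (Set.Icc 1 N) ∨ StrictAntiOn θ (Set.Icc 1 N))
    (hθ : ∀ i ∈ Set.Icc 1 N, θ i ∈ Set.Icc θ₀ (θ₀ + Real.pi))
    (hp : ∀ i ∈ Set.Icc 1 N, p i = circPt O r (θ i))
    (hS : ∀ j : ℕ, 2 ≤ j → j ≤ N - 1 →
      S j ⊆ interior (convexHull ℝ {p (j - 1), p j, p (j + 1)}) ∧
      S j ⊆ interior (convexHull ℝ {p 1, p j, p N}))
    (m : ℕ) (jj : ℕ → ℕ)
    (hjmono : StrictMonoOn jj (Set.Icc 1 m))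
    (hjrange : ∀ i ∈ Set.Icc 1 m, jj i ∈ Set.Icc 1 N) :
    ∀ i : ℕ, 2 ≤ i → i ≤ m - 1 →
      S (jj i) ⊆ interior (convexHull ℝ ((fun k => p (jj k)) '' Set.Icc 1 m)) := by
  obtain ⟨σ, hchain⟩ := exists_isConvexChain hr hmono hθ hp
  intro i hi him
  have hprev : i - 1 ∈ Icc 1 m := ⟨by omega, by omega⟩
  have hcur : i ∈ Icc 1 m := ⟨by omega, by omega⟩
  have hnext : i + 1 ∈ Icc 1 m := ⟨by omega, by omega⟩
  have hlt₁ : jj (i - 1) < jj i := hjmono hprev hcur (by omega)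
  have hlt₂ : jj i < jj (i + 1) := hjmono hcur hnext (by omega)
  have h₁ := (hjrange _ hprev).1
  have h₂ := (hjrange _ hnext).2
  obtain ⟨hS₁, hS₂⟩ := hS (jj i) (by omega) (by omega)
  have hvertices : {p (jj (i - 1)), p (jj i), p (jj (i + 1))} ⊆
      (fun k => p (jj k)) '' Icc 1 m := by
    rintro _ (rfl | rfl | rfl)
    exacts [mem_image_of_mem _ hprev, mem_image_of_mem _ hcur, mem_image_of_mem _ hnext]
  calc S (jj i)
      ⊆ interior (convexHull ℝ {p (jj i - 1), p (jj i), p (jj i + 1)}) ∩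
          interior (convexHull ℝ {p 1, p (jj i), p N}) := subset_inter hS₁ hS₂
    _ = interior (convexHull ℝ {p (jj i - 1), p (jj i), p (jj i + 1)} ∩
          convexHull ℝ {p 1, p (jj i), p N}) := interior_inter.symm
    _ ⊆ interior (convexHull ℝ {p (jj (i - 1)), p (jj i), p (jj (i + 1))}) :=
        interior_mono (hchain.inter_convexHull_subset h₁ hlt₁ hlt₂ h₂)
    _ ⊆ _ := interior_mono (convexHull_mono hvertices)

/-- Polygon containment property: for points `p 1, …, p N` ordered along a half-circle
with center `O`, with each `S j` contained in the interiors of the triangles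
`p (j-1) p j p (j+1)` and `p 1 p j p N`, if `Q` is the convex hull of points
`p (jj 1), …, p (jj m)` with strictly increasing indices, then for every middle index
`i` the set `S (jj i)` is contained in the topological interior of `Q`. -/
theorem polygon_contains_middle_point_sets (O : E2) (r : ℝ) (hr : 0 < r) (θ₀ : ℝ)
    (N : ℕ) (hN : 3 ≤ N) (θ : ℕ → ℝ) (p : ℕ → E2) (S : ℕ → Set E2)
    (hmono : StrictMonoOn θ (Set.Icc 1 N) ∨ StrictAntiOn θ (Set.Icc 1 N))
    (hθ : ∀ i ∈ Set.Icc 1 N, θ i ∈ Set.Icc θ₀ (θ₀ + Real.pi))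
    (hp : ∀ i ∈ Set.Icc 1 N, p i = circPt O r (θ i))
    (hS : ∀ j : ℕ, 2 ≤ j → j ≤ N - 1 →
      S j ⊆ interior (convexHull ℝ {p (j - 1), p j, p (j + 1)}) ∧
      S j ⊆ interior (convexHull ℝ {p 1, p j, p N}))
    (m : ℕ) (hm : 3 ≤ m) (jj : ℕ → ℕ)
    (hjmono : StrictMonoOn jj (Set.Icc 1 m))
    (hjrange : ∀ i ∈ Set.Icc 1 m, jj i ∈ Set.Icc 1 N)
    (hjmid : ∀ i : ℕ, 2 ≤ i → i ≤ m - 1 → 2 ≤ jj i ∧ jj i ≤ N - 1) :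
    ∀ i : ℕ, 2 ≤ i → i ≤ m - 1 →
      S (jj i) ⊆ interior (convexHull ℝ ((fun k => p (jj k)) '' Set.Icc 1 m)) :=
  polygon_contains_middle_point_sets_general O r hr θ₀ N θ p S hmono hθ hp hS m jj hjmono hjrange

end
end
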